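/- Collection squares compose with covering squares: given a commuting diagram of two squares F → D → B over E → C → A where both squares are covering squares (the horizontal maps on the bottom are surjections and the induced maps to the pullbacks are surjections), if either of the two inner squares is a collection square then the outer square (F → B over E → A) is a collection square. -/

import Mathlib

/-- A covering square (right edge `f`, bottom `p`, left `g`, top `q`):
the square commutes, `p` is a surjection and the induced map `D → B ×_A C`
is a surjection. -/
def IsCoveringSq {A B C D : Type} (f : B → A) (p : C → A) (g : D → C) (q : D → B) : Prop :=
  (∀ d, f (q d) = p (g d)) ∧ Function.Surjective p ∧
  (∀ (b : B) (c : C), f b = p c → ∃ d, q d = b ∧ g d = c)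

/-- The additional collection condition of a collection square. -/
def CollCond {A B C D : Type} (f : B → A) (p : C → A) (g : D → C) (q : D → B) : Prop :=
  ∀ (a : A) (E : Type) (e : E → {b : B // f b = a}), Function.Surjective e →
    ∃ c : C, p c = a ∧ ∃ h : {d : D // g d = c} → E,
      ∀ d : {d : D // g d = c}, ((e (h d)) : {b : B // f b = a}).1 = q d.1

lemma Function.Surjective.pullback_snd {X Y Z : Type*} {f : X → Y} (hf : f.Surjective)
    (g : Z → Y) : (Function.Pullback.snd : f.Pullback g → Z).Surjective := fun z ↦
  let ⟨x, hx⟩ := hf (g z)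
  ⟨⟨(x, z), hx⟩, rfl⟩

section Composition

variable {A B C D E F : Type} {f : B → A} {ρ : C → A} {g : D → C} {σ : D → B}
  {α : E → C} {m : F → E} {β : F → D}

lemma IsCoveringSq.comp (h₁ : IsCoveringSq g α m β) (h₂ : IsCoveringSq f ρ g σ) :
    IsCoveringSq f (fun x ↦ ρ (α x)) m (fun x ↦ σ (β x)) := by
  obtain ⟨comm₁, surj₁, lift₁⟩ := h₁
  obtain ⟨comm₂, surj₂, lift₂⟩ := h₂
  refine ⟨fun x ↦ by rw [comm₂, comm₁], surj₂.comp surj₁, fun b e hbe ↦ ?_⟩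
  obtain ⟨d, rfl, hd⟩ := lift₂ b (α e) hbe
  obtain ⟨x, rfl, hx⟩ := lift₁ d e hd
  exact ⟨x, rfl, hx⟩

/-- A surjection onto a fibre of `f` pulls back along `σ` to a surjection onto a fibre of `g`,
to which the collection condition of the left square applies. -/
lemma CollCond.comp_of_left (hcoll : CollCond g α m β) (comm₂ : ∀ d, f (σ d) = ρ (g d))
    (surj₂ : ρ.Surjective) : CollCond f (fun x ↦ ρ (α x)) m (fun x ↦ σ (β x)) := by
  intro a E' e he
  obtain ⟨c₀, rfl⟩ := surj₂ a
  let σ₀ : {d : D // g d = c₀} → {b : B // f b = ρ c₀} := fun d ↦ ⟨σ d, by rw [comm₂, d.2]⟩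
  obtain ⟨c, rfl, h, hh⟩ := hcoll c₀ (e.Pullback σ₀) _ (he.pullback_snd σ₀)
  exact ⟨c, rfl, fun x ↦ (h x).fst,
    fun x ↦ (congrArg Subtype.val (h x).2).trans (congrArg σ (hh x))⟩

lemma CollCond.comp_of_right (hcoll : CollCond f ρ g σ) (comm₁ : ∀ x, g (β x) = α (m x))
    (surj₁ : α.Surjective) : CollCond f (fun x ↦ ρ (α x)) m (fun x ↦ σ (β x)) := by
  intro a E' e he
  obtain ⟨c₀, rfl, h, hh⟩ := hcoll a E' e he
  obtain ⟨c, rfl⟩ := surj₁ c₀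
  let β₀ : {x : F // m x = c} → {d : D // g d = α c} := fun x ↦ ⟨β x, by rw [comm₁, x.2]⟩
  exact ⟨c, rfl, fun x ↦ h (β₀ x), fun x ↦ hh (β₀ x)⟩

end Composition

/-- given two horizontally composable covering squares
`F → D → B` over `E → C → A`, if either inner square is a collection square
then the outer square is a collection square. -/
theorem stmt_6 {A B C D E F : Type}
    (f : B → A) (ρ : C → A) (g : D → C) (σ : D → B)
    (α : E → C) (m : F → E) (β : F → D)
    (h1 : IsCoveringSq g α m β) (h2 : IsCoveringSq f ρ g σ)
    (h3 : CollCond g α m β ∨ CollCond f ρ g σ) :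
    IsCoveringSq f (fun x => ρ (α x)) m (fun x => σ (β x)) ∧
    CollCond f (fun x => ρ (α x)) m (fun x => σ (β x)) :=
  ⟨h1.comp h2, h3.elim (·.comp_of_left h2.1 h2.2.1) (·.comp_of_right h1.1 h1.2.1)⟩
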